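/- arXiv:2512.24478 — 3 statements merged into one kernel-verified Lean document; each statement's English description precedes it below -/
import Mathlib

section
/- Transitivity of the algebraic latent projection: let W and M be real square matrices indexed by a finite type partitioned into three disjoint sets O, H₁, H₂. Suppose I − W_{H₂H₂} is invertible; let (W¹, M¹) be the algebraic latent projection of (W, M) onto O ∪ H₁ (marginalizing H₂). Suppose further that I − (W¹)_{H₁H₁} is invertible and that I − W_{HH} is invertible, where H = H₁ ∪ H₂. Then the algebraic latent projection of (W¹, M¹) onto O (marginalizing H₁) equals the algebraic latent projection of (W, M) onto O (marginalizing H in one step), for both the adjacency component and the covariance component. -/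
open scoped Matrix

/-!
STATEMENT 6: Transitivity of the algebraic latent projection.  The finite index type is
partitioned into three disjoint sets O, H₁, H₂, modelled as the sum type o ⊕ (h₁ ⊕ h₂).
Suppose I − W_{H₂H₂} is invertible; let (W¹, M¹) be the algebraic latent projection of (W, M)
onto O ∪ H₁ (marginalizing H₂).  Suppose further that I − (W¹)_{H₁H₁} is invertible and that
I − W_{HH} is invertible, where H = H₁ ∪ H₂.  Then the algebraic latent projection of
(W¹, M¹) onto O (marginalizing H₁) equals the algebraic latent projection of (W, M) onto O
(marginalizing H in one step), for both the adjacency and the covariance components.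
-/

variable {o h : Type*} [Fintype o] [Fintype h] [DecidableEq o] [DecidableEq h]

/-- Absorption matrix of a matrix over `o ⊕ h`, marginalizing the hidden block `h`:
A = W_OH (I − W_HH)⁻¹. -/
noncomputable def latentA (W : Matrix (o ⊕ h) (o ⊕ h) ℝ) : Matrix o h ℝ :=
  W.toBlocks₁₂ * (1 - W.toBlocks₂₂)⁻¹

/-- Projected adjacency matrix W̃ = W_OO + A W_HO. -/
noncomputable def latentW (W : Matrix (o ⊕ h) (o ⊕ h) ℝ) : Matrix o o ℝ :=
  W.toBlocks₁₁ + latentA W * W.toBlocks₂₁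

/-- Projected covariance M̃ = M_OO + A M_HH Aᵀ + M_OH Aᵀ + A M_HO. -/
noncomputable def latentM (W M : Matrix (o ⊕ h) (o ⊕ h) ℝ) : Matrix o o ℝ :=
  M.toBlocks₁₁ + latentA W * M.toBlocks₂₂ * (latentA W)ᵀ +
    M.toBlocks₁₂ * (latentA W)ᵀ + latentA W * M.toBlocks₂₁


/-!
Write `P = [I | A]` (`latentP W`) for the matrix of the projection onto `O`. Then `M̃ = P M Pᵀ`
and `P (I - W) = [I - W̃ | 0]`, and when `I - W_HH` is invertible `P` is the only matrix of the
form `[I | X]` whose product with `I - W` vanishes on the hidden columns. For the two-step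
projection, `P₁ P₂` has the form `[I | X]` and
`P₁ P₂ (I - W) = P₁ [I - W¹ | 0] = [I - W̃¹ | 0 | 0]`, so `P₁ P₂` is the one-step `P`. Comparing observed columns gives `W̃¹ = W̃`, and
`M̃¹ = (P₁ P₂) M (P₁ P₂)ᵀ = M̃`. The invertibility of `I - W_HH` needed for uniqueness comes from
that of `I - W_{H₂H₂}` and of its Schur complement `I - W¹_{H₁H₁}`.
-/

open Matrix

section

variable {o h : Type*} [Fintype o] [Fintype h] [DecidableEq o] [DecidableEq h]

noncomputable def latentP (W : Matrix (o ⊕ h) (o ⊕ h) ℝ) : Matrix o (o ⊕ h) ℝ :=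
  fromCols 1 (latentA W)

omit [Fintype o] [Fintype h] in
theorem one_sub_eq_fromBlocks {α : Type*} [Ring α] (W : Matrix (o ⊕ h) (o ⊕ h) α) :
    1 - W = fromBlocks (1 - W.toBlocks₁₁) (-W.toBlocks₁₂) (-W.toBlocks₂₁) (1 - W.toBlocks₂₂) := by
  ext (i | i) (j | j) <;> simp [one_apply, toBlocks₁₁, toBlocks₁₂, toBlocks₂₁, toBlocks₂₂]

theorem fromCols_one_mul_one_sub (W : Matrix (o ⊕ h) (o ⊕ h) ℝ) (X : Matrix o h ℝ) :
    -- without the ascription the product is elaborated at `CStarMatrix`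
    fromCols (1 : Matrix o o ℝ) X * (1 - W) =
      fromCols (1 - (W.toBlocks₁₁ + X * W.toBlocks₂₁)) (X * (1 - W.toBlocks₂₂) - W.toBlocks₁₂) := by
  rw [one_sub_eq_fromBlocks, fromCols_mul_fromBlocks]
  congr 1 <;> simp only [Matrix.one_mul, Matrix.mul_neg] <;> abel

omit [Fintype o] [DecidableEq o] in
theorem latentA_mul_one_sub {W : Matrix (o ⊕ h) (o ⊕ h) ℝ} (hW : IsUnit (1 - W.toBlocks₂₂)) :
    latentA W * (1 - W.toBlocks₂₂) = W.toBlocks₁₂ := by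
  rw [latentA, Matrix.mul_assoc, nonsing_inv_mul _ ((isUnit_iff_isUnit_det _).mp hW),
    Matrix.mul_one]

theorem latentP_mul_one_sub {W : Matrix (o ⊕ h) (o ⊕ h) ℝ} (hW : IsUnit (1 - W.toBlocks₂₂)) :
    latentP W * (1 - W) = fromCols (1 - latentW W) 0 := by
  rw [latentP, fromCols_one_mul_one_sub, latentA_mul_one_sub hW, sub_self, latentW]

theorem eq_latentP_of_toCols {W : Matrix (o ⊕ h) (o ⊕ h) ℝ} (hW : IsUnit (1 - W.toBlocks₂₂))
    {P : Matrix o (o ⊕ h) ℝ} (hP₁ : P.toCols₁ = 1) (hP₂ : (P * (1 - W)).toCols₂ = 0) :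
    P = latentP W := by
  obtain ⟨X, rfl⟩ : ∃ X, P = fromCols 1 X := ⟨P.toCols₂, by rw [← hP₁, fromCols_toCols]⟩
  rw [fromCols_one_mul_one_sub, toCols₂_fromCols, sub_eq_zero] at hP₂
  rw [latentP, latentA, ← hP₂, Matrix.mul_assoc,
    mul_nonsing_inv _ ((isUnit_iff_isUnit_det _).mp hW), Matrix.mul_one]

theorem latentM_eq_latentP_mul_mul_transpose (W M : Matrix (o ⊕ h) (o ⊕ h) ℝ) :
    latentM W M = latentP W * M * (latentP W)ᵀ := by
  conv_rhs => rw [latentP, ← fromBlocks_toBlocks M, fromCols_mul_fromBlocks, transpose_fromCols,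
    fromCols_mul_fromRows]
  simp only [Matrix.one_mul, transpose_one, Matrix.mul_one, Matrix.add_mul]
  rw [latentM]
  abel

theorem isUnit_one_sub_iff_latentW {V : Matrix (o ⊕ h) (o ⊕ h) ℝ} (hV : IsUnit (1 - V.toBlocks₂₂)) :
    IsUnit (1 - V) ↔ IsUnit (1 - latentW V) := by
  have := hV.invertible
  rw [one_sub_eq_fromBlocks, isUnit_fromBlocks_iff_of_invertible₂₂, invOf_eq_nonsing_inv,
    latentW, latentA]
  simp only [Matrix.neg_mul, Matrix.mul_neg, neg_neg, sub_sub]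

end

section

variable {o h₁ h₂ : Type*} [Fintype o] [Fintype h₁] [Fintype h₂]
  [DecidableEq o] [DecidableEq h₁] [DecidableEq h₂]

local notation "σ" => Equiv.sumAssoc o h₁ h₂

omit [Fintype o] [Fintype h₁] [Fintype h₂] [DecidableEq o] [DecidableEq h₁] [DecidableEq h₂] in
theorem fromCols_fromCols_submatrix_sumAssoc_symm {m α : Type*} (A : Matrix m o α)
    (B : Matrix m h₁ α) (C : Matrix m h₂ α) :
    (fromCols (fromCols A B) C).submatrix id (σ).symm = fromCols A (fromCols B C) := by
  ext i (j | j | j) <;> rfl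

omit [Fintype o] [Fintype h₁] [Fintype h₂] [DecidableEq o] [DecidableEq h₁] [DecidableEq h₂] in
theorem submatrix_mul_mul_transpose_submatrix {m n n' α : Type*} [Fintype n] [Fintype n']
    [AddCommMonoid α] [Mul α] (P : Matrix m n α) (M : Matrix n n α) (e : n' ≃ n) :
    P.submatrix id e * M.submatrix e e * (P.submatrix id e)ᵀ = P * M * Pᵀ := by
  rw [transpose_submatrix, submatrix_mul_equiv, submatrix_mul_equiv, submatrix_id_id]

theorem latentP_latentW_mul_latentP_mul_one_sub {W : Matrix ((o ⊕ h₁) ⊕ h₂) ((o ⊕ h₁) ⊕ h₂) ℝ}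
    (h2 : IsUnit (1 - W.toBlocks₂₂)) (h1 : IsUnit (1 - (latentW W).toBlocks₂₂)) :
    latentP (latentW W) * latentP W * (1 - W) =
      fromCols (fromCols (1 - latentW (latentW W)) 0) 0 := by
  rw [Matrix.mul_assoc, latentP_mul_one_sub h2, mul_fromCols, latentP_mul_one_sub h1,
    Matrix.mul_zero]

variable (W : Matrix (o ⊕ (h₁ ⊕ h₂)) (o ⊕ (h₁ ⊕ h₂)) ℝ)

omit [Fintype o] [DecidableEq o] in
theorem isUnit_one_sub_toBlocks₂₂_of_latentW (h2 : IsUnit (1 - (W.submatrix σ σ).toBlocks₂₂))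
    (h1 : IsUnit (1 - (latentW (W.submatrix σ σ)).toBlocks₂₂)) :
    IsUnit (1 - W.toBlocks₂₂) :=
  (isUnit_one_sub_iff_latentW (V := W.toBlocks₂₂) h2).2 h1

theorem submatrix_latentP_latentW_mul_latentP_mul_one_sub
    (h2 : IsUnit (1 - (W.submatrix σ σ).toBlocks₂₂))
    (h1 : IsUnit (1 - (latentW (W.submatrix σ σ)).toBlocks₂₂)) :
    (latentP (latentW (W.submatrix σ σ)) * latentP (W.submatrix σ σ)).submatrix id (σ).symm *
        (1 - W) = fromCols (1 - latentW (latentW (W.submatrix σ σ))) 0 := by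
  have h1W : 1 - W = (1 - W.submatrix σ σ).submatrix (σ).symm (σ).symm := by
    simp [submatrix_sub, submatrix_submatrix]
  rw [h1W, submatrix_mul_equiv, latentP_latentW_mul_latentP_mul_one_sub h2 h1,
    fromCols_fromCols_submatrix_sumAssoc_symm, fromCols_zero]

theorem latentP_eq_submatrix_latentP_latentW_mul_latentP
    (h2 : IsUnit (1 - (W.submatrix σ σ).toBlocks₂₂))
    (h1 : IsUnit (1 - (latentW (W.submatrix σ σ)).toBlocks₂₂)) :
    latentP W =
      (latentP (latentW (W.submatrix σ σ)) * latentP (W.submatrix σ σ)).submatrix id (σ).symm := by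
  refine (eq_latentP_of_toCols (isUnit_one_sub_toBlocks₂₂_of_latentW W h2 h1) ?_ ?_).symm
  · rw [latentP, latentP, mul_fromCols, Matrix.mul_one, fromCols_fromCols_submatrix_sumAssoc_symm,
      toCols₁_fromCols]
  · rw [submatrix_latentP_latentW_mul_latentP_mul_one_sub W h2 h1, toCols₂_fromCols]

theorem latentW_latentW_submatrix_sumAssoc
    (h2 : IsUnit (1 - (W.submatrix σ σ).toBlocks₂₂))
    (h1 : IsUnit (1 - (latentW (W.submatrix σ σ)).toBlocks₂₂)) :
    latentW (latentW (W.submatrix σ σ)) = latentW W := by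
  have h := latentP_mul_one_sub (isUnit_one_sub_toBlocks₂₂_of_latentW W h2 h1)
  rw [latentP_eq_submatrix_latentP_latentW_mul_latentP W h2 h1,
    submatrix_latentP_latentW_mul_latentP_mul_one_sub W h2 h1] at h
  exact sub_right_injective (fromCols_inj h).1

theorem latentM_latentW_submatrix_sumAssoc (M : Matrix (o ⊕ (h₁ ⊕ h₂)) (o ⊕ (h₁ ⊕ h₂)) ℝ)
    (h2 : IsUnit (1 - (W.submatrix σ σ).toBlocks₂₂))
    (h1 : IsUnit (1 - (latentW (W.submatrix σ σ)).toBlocks₂₂)) :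
    latentM (latentW (W.submatrix σ σ)) (latentM (W.submatrix σ σ) (M.submatrix σ σ)) =
      latentM W M := by
  set P₁ := latentP (latentW (W.submatrix σ σ))
  set P₂ := latentP (W.submatrix σ σ)
  have hP : P₁ * P₂ = (latentP W).submatrix id σ := by
    rw [latentP_eq_submatrix_latentP_latentW_mul_latentP W h2 h1, submatrix_submatrix,
      Function.comp_id, Equiv.symm_comp_self, submatrix_id_id]
  calc _ = P₁ * (P₂ * M.submatrix σ σ * P₂ᵀ) * P₁ᵀ := by
        rw [latentM_eq_latentP_mul_mul_transpose, latentM_eq_latentP_mul_mul_transpose]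
    _ = P₁ * P₂ * M.submatrix σ σ * (P₁ * P₂)ᵀ := by
        simp only [transpose_mul, Matrix.mul_assoc]
    _ = latentM W M := by
        rw [hP, submatrix_mul_mul_transpose_submatrix, latentM_eq_latentP_mul_mul_transpose]

end

theorem latent_projection_transitive_general
    {o h₁ h₂ : Type*} [Fintype o] [Fintype h₁] [Fintype h₂]
    [DecidableEq o] [DecidableEq h₁] [DecidableEq h₂]
    (W M : Matrix (o ⊕ (h₁ ⊕ h₂)) (o ⊕ (h₁ ⊕ h₂)) ℝ)
    -- `W` and `M` reindexed so that the observed block is O ∪ H₁ and the hidden block is H₂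
    (W' M' : Matrix ((o ⊕ h₁) ⊕ h₂) ((o ⊕ h₁) ⊕ h₂) ℝ)
    (hW' : W' = Matrix.reindex (Equiv.sumAssoc o h₁ h₂).symm (Equiv.sumAssoc o h₁ h₂).symm W)
    (hM' : M' = Matrix.reindex (Equiv.sumAssoc o h₁ h₂).symm (Equiv.sumAssoc o h₁ h₂).symm M)
    -- I − W_{H₂H₂} is invertible
    (h2 : IsUnit (1 - W'.toBlocks₂₂))
    -- the first projection (W¹, M¹) of (W, M) onto O ∪ H₁, marginalizing H₂
    (W1 M1 : Matrix (o ⊕ h₁) (o ⊕ h₁) ℝ)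
    (hW1 : W1 = latentW W') (hM1 : M1 = latentM W' M')
    -- I − (W¹)_{H₁H₁} is invertible
    (h1 : IsUnit (1 - W1.toBlocks₂₂)) :
    latentW W1 = latentW W ∧ latentM W1 M1 = latentM W M := by
  rw [reindex_apply, Equiv.symm_symm] at hW' hM'
  subst hW' hM' hW1 hM1
  exact ⟨latentW_latentW_submatrix_sumAssoc W h2 h1, latentM_latentW_submatrix_sumAssoc W M h2 h1⟩

theorem latent_projection_transitive
    {o h₁ h₂ : Type*} [Fintype o] [Fintype h₁] [Fintype h₂]
    [DecidableEq o] [DecidableEq h₁] [DecidableEq h₂]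
    (W M : Matrix (o ⊕ (h₁ ⊕ h₂)) (o ⊕ (h₁ ⊕ h₂)) ℝ)
    -- `W` and `M` reindexed so that the observed block is O ∪ H₁ and the hidden block is H₂
    (W' M' : Matrix ((o ⊕ h₁) ⊕ h₂) ((o ⊕ h₁) ⊕ h₂) ℝ)
    (hW' : W' = Matrix.reindex (Equiv.sumAssoc o h₁ h₂).symm (Equiv.sumAssoc o h₁ h₂).symm W)
    (hM' : M' = Matrix.reindex (Equiv.sumAssoc o h₁ h₂).symm (Equiv.sumAssoc o h₁ h₂).symm M)
    -- I − W_{H₂H₂} is invertible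
    (h2 : IsUnit (1 - W'.toBlocks₂₂))
    -- the first projection (W¹, M¹) of (W, M) onto O ∪ H₁, marginalizing H₂
    (W1 M1 : Matrix (o ⊕ h₁) (o ⊕ h₁) ℝ)
    (hW1 : W1 = latentW W') (hM1 : M1 = latentM W' M')
    -- I − (W¹)_{H₁H₁} is invertible
    (h1 : IsUnit (1 - W1.toBlocks₂₂))
    -- I − W_{HH} is invertible, where H = H₁ ∪ H₂
    (hH : IsUnit (1 - W.toBlocks₂₂)) :
    latentW W1 = latentW W ∧ latentM W1 M1 = latentM W M :=
  latent_projection_transitive_general W M W' M' hW' hM' h2 W1 M1 hW1 hM1 h1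
end

section
/- Let W be a real square matrix indexed by a finite type whose digraph is acyclic, partitioned by observed indices O and hidden indices H (so that I − W_HH is invertible). Then the digraph of the projected adjacency matrix W̃ = W_OO + W_OH (I − W_HH)^{−1} W_HO is also acyclic; in particular W̃ is nilpotent. -/
/-!
STATEMENT 8: Let W be a real square matrix indexed by a finite type whose digraph
(edge i → j whenever W i j ≠ 0) is acyclic, partitioned by observed indices O and hidden
indices H = Oᶜ (so that I − W_HH is invertible).  Then the digraph of the projected adjacency
matrix W̃ = W_OO + W_OH (I − W_HH)⁻¹ W_HO is also acyclic; in particular W̃ is nilpotent.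
-/

/-- `W` is acyclic if the digraph with an edge `i → j` whenever `W i j ≠ 0` has no directed
cycle, i.e. no index is reachable from itself along a nonempty directed path. -/
def Matrix.IsAcyclicDigraph {n : Type*} (W : Matrix n n ℝ) : Prop :=
  ∀ i, ¬ Relation.TransGen (fun a b => W a b ≠ 0) i i

variable {n : Type*} [Fintype n] [DecidableEq n]

/-- The O×O block of `W`. -/
def blockOO (W : Matrix n n ℝ) (O : Set n) : Matrix O O ℝ :=
  Matrix.of fun i j => W i.1 j.1

/-- The O×H block of `W` (H = Oᶜ is the set of hidden indices). -/
def blockOH (W : Matrix n n ℝ) (O : Set n) : Matrix O ↥(Oᶜ) ℝ :=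
  Matrix.of fun i j => W i.1 j.1

/-- The H×O block of `W`. -/
def blockHO (W : Matrix n n ℝ) (O : Set n) : Matrix ↥(Oᶜ) O ℝ :=
  Matrix.of fun i j => W i.1 j.1

/-- The H×H block of `W`. -/
def blockHH (W : Matrix n n ℝ) (O : Set n) : Matrix ↥(Oᶜ) ↥(Oᶜ) ℝ :=
  Matrix.of fun i j => W i.1 j.1

/-- The projected adjacency matrix W̃ = W_OO + W_OH (I − W_HH)⁻¹ W_HO. -/
noncomputable def projW (W : Matrix n n ℝ) (O : Set n) [DecidablePred (· ∈ O)] :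
    Matrix O O ℝ :=
  blockOO W O + blockOH W O * (1 - blockHH W O)⁻¹ * blockHO W O

/-!
Every nonzero entry of `Aᵏ` is witnessed by a directed path of length `k` in the digraph of `A`.
In an acyclic digraph the set of vertices reachable from a vertex strictly shrinks along each
edge, so such paths are shorter than the number of vertices: an acyclic `W_HH` is nilpotent and
`(I − W_HH)⁻¹ = ∑ₖ W_HHᵏ` is a finite sum. Hence a nonzero entry `W̃ i j` comes either from
an edge `i → j` of `W` or from a path `i → h → ⋯ → h' → j` of `W` through hidden vertices, and a
cycle of `W̃` would lift to a cycle of `W`.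
-/

open Relation

namespace Matrix

section Support

variable {l m o R : Type*} [Fintype m]

lemma exists_apply_ne_zero_of_mul_apply_ne_zero [NonUnitalNonAssocSemiring R]
    {B : Matrix l m R} {C : Matrix m o R} {i : l} {j : o} (h : (B * C) i j ≠ 0) :
    ∃ x, B i x ≠ 0 ∧ C x j ≠ 0 := by
  obtain ⟨x, -, hx⟩ := Finset.exists_ne_zero_of_sum_ne_zero h
  exact ⟨x, left_ne_zero_of_mul hx, right_ne_zero_of_mul hx⟩

variable [DecidableEq m]

lemma reflTransGen_of_pow_apply_ne_zero [Semiring R] {A : Matrix m m R} {k : ℕ} {i j : m}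
    (h : (A ^ k) i j ≠ 0) : ReflTransGen (fun a b => A a b ≠ 0) i j := by
  induction k generalizing j with
  | zero =>
    obtain rfl : i = j := by_contra fun hij => h (one_apply_ne hij)
    exact .refl
  | succ k ih =>
    rw [pow_succ] at h
    obtain ⟨x, hix, hxj⟩ := exists_apply_ne_zero_of_mul_apply_ne_zero h
    exact (ih hix).tail hxj

lemma inv_one_sub_eq_sum_pow [CommRing R] {A : Matrix m m R} {N : ℕ} (hA : A ^ N = 0) :
    (1 - A)⁻¹ = ∑ k ∈ Finset.range N, A ^ k :=
  inv_eq_right_inv (by rw [mul_neg_geom_sum, hA, sub_zero])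

lemma reflTransGen_of_inv_one_sub_apply_ne_zero [CommRing R] {A : Matrix m m R}
    (hA : IsNilpotent A) {i j : m} (h : (1 - A)⁻¹ i j ≠ 0) :
    ReflTransGen (fun a b => A a b ≠ 0) i j := by
  obtain ⟨N, hN⟩ := hA
  rw [inv_one_sub_eq_sum_pow hN, sum_apply] at h
  obtain ⟨k, -, hk⟩ := Finset.exists_ne_zero_of_sum_ne_zero h
  exact reflTransGen_of_pow_apply_ne_zero hk

end Support

namespace IsAcyclicDigraph

variable {m m' : Type*} {A : Matrix m m ℝ}

lemma of_transGen (hA : A.IsAcyclicDigraph) {B : Matrix m' m' ℝ} (f : m' → m)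
    (h : ∀ i j, B i j ≠ 0 → TransGen (fun a b => A a b ≠ 0) (f i) (f j)) :
    B.IsAcyclicDigraph :=
  fun i hi => hA (f i) (TransGen.lift' f h i i hi)

lemma submatrix (hA : A.IsAcyclicDigraph) (f : m' → m) : (A.submatrix f f).IsAcyclicDigraph :=
  hA.of_transGen f fun _ _ hij => .single hij

variable [Fintype m] [DecidableEq m]

lemma le_ncard_of_pow_apply_ne_zero (hA : A.IsAcyclicDigraph) {k : ℕ} {i j : m}
    (h : (A ^ k) i j ≠ 0) : k ≤ {x | TransGen (fun a b => A a b ≠ 0) i x}.ncard := by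
  induction k generalizing i with
  | zero => exact Nat.zero_le _
  | succ k ih =>
    rw [pow_succ'] at h
    obtain ⟨x, hix, hxj⟩ := exists_apply_ne_zero_of_mul_apply_ne_zero h
    have hsub : {y | TransGen (fun a b => A a b ≠ 0) x y} ⊂
        {y | TransGen (fun a b => A a b ≠ 0) i y} :=
      ⟨fun _ hy => hy.head hix, fun hsup => hA x (hsup (TransGen.single hix))⟩
    exact (ih hxj).trans_lt (Set.ncard_lt_ncard hsub)

lemma isNilpotent (hA : A.IsAcyclicDigraph) : IsNilpotent A := by
  refine ⟨Nat.card m, ext fun i j => by_contra fun h => ?_⟩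
  have hlt : {x | TransGen (fun a b => A a b ≠ 0) i x}.ncard < Nat.card m := by
    rw [← Set.ncard_univ]
    exact Set.ncard_lt_ncard ⟨Set.subset_univ _, fun huniv => hA i (huniv (Set.mem_univ i))⟩
  exact (hA.le_ncard_of_pow_apply_ne_zero h).not_gt hlt

end IsAcyclicDigraph

end Matrix

open Matrix

lemma transGen_of_projW_apply_ne_zero {W : Matrix n n ℝ} {O : Set n} [DecidablePred (· ∈ O)]
    (hHH : IsNilpotent (blockHH W O)) {i j : O} (h : projW W O i j ≠ 0) :
    TransGen (fun a b => W a b ≠ 0) i j := by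
  rw [projW, Matrix.add_apply] at h
  rcases ne_or_eq (blockOO W O i j) 0 with hOO | hOO
  · exact .single hOO
  rw [hOO, zero_add] at h
  obtain ⟨h₂, hmid, hHO⟩ := exists_apply_ne_zero_of_mul_apply_ne_zero h
  obtain ⟨h₁, hOH, hinv⟩ := exists_apply_ne_zero_of_mul_apply_ne_zero hmid
  have hpath : ReflTransGen (fun a b => W a b ≠ 0) h₁ h₂ :=
    (reflTransGen_of_inv_one_sub_apply_ne_zero hHH hinv).lift Subtype.val fun _ _ => id
  exact (TransGen.head' (r := fun a b => W a b ≠ 0) hOH hpath).tail hHO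

theorem projW_acyclic_of_acyclic
    (W : Matrix n n ℝ) (hW : W.IsAcyclicDigraph) (O : Set n) [DecidablePred (· ∈ O)] :
    IsUnit (1 - blockHH W O) ∧ (projW W O).IsAcyclicDigraph ∧ IsNilpotent (projW W O) := by
  have hHH : IsNilpotent (blockHH W O) := (hW.submatrix Subtype.val).isNilpotent
  have hproj : (projW W O).IsAcyclicDigraph :=
    hW.of_transGen Subtype.val fun _ _ => transGen_of_projW_apply_ne_zero hHH
  exact ⟨hHH.isUnit_one_sub, hproj, hproj.isNilpotent⟩
end

section
/- For a real n×n matrix W, one has tr(exp(W ∘ W)) − n = 0 if and only if the digraph of W is acyclic, where ∘ denotes the entrywise (Hadamard) product and exp the matrix exponential. -/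
/-!
The matrix `A = W ⊙ W` is entrywise nonnegative and has the same digraph as `W`. Expanding
the exponential, `tr (exp A) - n = ∑_{k ≥ 1} tr (A ^ k) / k!` is a series of nonnegative terms,
so it vanishes iff `tr (A ^ k) = 0` for every `k ≥ 1`. For a nonnegative matrix, `(A ^ k) i i > 0`
exactly when the digraph has a closed walk of length `k` through `i`, so these traces all vanish
iff the digraph has no cycle.
-/

open scoped Matrix

open NormedSpace
open scoped Nat

namespace Matrix

variable {m R : Type*} [Fintype m] [DecidableEq m]

theorem transGen_of_pow_succ_apply_ne_zero [Semiring R] {A : Matrix m m R}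
    {i j : m} (k : ℕ) (h : (A ^ (k + 1)) i j ≠ 0) :
    Relation.TransGen (fun a b => A a b ≠ 0) i j := by
  induction k generalizing j with
  | zero => exact .single (by simpa using h)
  | succ k ih =>
    rw [pow_succ, mul_apply] at h
    obtain ⟨l, -, hl⟩ := Finset.exists_ne_zero_of_sum_ne_zero h
    exact (ih (left_ne_zero_of_mul hl)).tail (right_ne_zero_of_mul hl)

theorem exists_pow_succ_apply_pos_of_transGen [Semiring R] [PartialOrder R]
    [IsStrictOrderedRing R] {A : Matrix m m R} (hA : ∀ i j, 0 ≤ A i j) {i j : m}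
    (h : Relation.TransGen (fun a b => A a b ≠ 0) i j) : ∃ k, 0 < (A ^ (k + 1)) i j := by
  induction h with
  | single hij => exact ⟨0, by simpa using (hA _ _).lt_of_ne' hij⟩
  | tail _ hlj ih =>
    obtain ⟨k, hk⟩ := ih
    refine ⟨k + 1, ?_⟩
    rw [pow_succ, mul_apply]
    exact Finset.sum_pos' (fun l _ => mul_nonneg (pow_apply_nonneg hA _ _ _) (hA _ _))
      ⟨_, Finset.mem_univ _, mul_pos hk ((hA _ _).lt_of_ne' hlj)⟩

theorem transGen_iff_exists_pow_succ_apply_ne_zero [Semiring R] [PartialOrder R]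
    [IsStrictOrderedRing R] {A : Matrix m m R} (hA : ∀ i j, 0 ≤ A i j) {i j : m} :
    Relation.TransGen (fun a b => A a b ≠ 0) i j ↔ ∃ k, (A ^ (k + 1)) i j ≠ 0 :=
  ⟨fun h => (exists_pow_succ_apply_pos_of_transGen hA h).imp fun _ => ne_of_gt,
    fun ⟨k, hk⟩ => transGen_of_pow_succ_apply_ne_zero k hk⟩

theorem hasSum_trace_exp {𝕂 : Type*} [RCLike 𝕂] (A : Matrix m m 𝕂) :
    HasSum (fun k => (k ! : 𝕂)⁻¹ * (A ^ k).trace) (exp A).trace := by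
  -- The operator norm induces the product topology used by `exp`; it only serves to make the
  -- series converge.
  have h := open scoped Norms.Operator in
    (exp_series_hasSum_exp' (𝕂 := 𝕂) A).map (traceAddMonoidHom m 𝕂)
      (continuous_id.matrix_trace : Continuous (trace : Matrix m m 𝕂 → 𝕂))
  simp only [Function.comp_def, traceAddMonoidHom_apply, trace_smul, smul_eq_mul] at h
  exact h

theorem forall_trace_pow_succ_eq_zero_iff [Semiring R] [PartialOrder R] [IsStrictOrderedRing R]
    {A : Matrix m m R} (hA : ∀ i j, 0 ≤ A i j) :
    (∀ k, (A ^ (k + 1)).trace = 0) ↔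
      ∀ i, ¬ Relation.TransGen (fun a b => A a b ≠ 0) i i := by
  simp only [trace, diag_apply, Finset.mem_univ, true_implies,
    Finset.sum_eq_zero_iff_of_nonneg fun i _ => pow_apply_nonneg hA _ i i,
    transGen_iff_exists_pow_succ_apply_ne_zero hA, not_exists, not_not]
  exact forall_comm

theorem trace_exp_eq_card_iff {A : Matrix m m ℝ} (hA : ∀ i j, 0 ≤ A i j) :
    (exp A).trace = Fintype.card m ↔ ∀ k, (A ^ (k + 1)).trace = 0 := by
  set f : ℕ → ℝ := fun k => ((k + 1)! : ℝ)⁻¹ * (A ^ (k + 1)).trace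
  have htail : HasSum f ((exp A).trace - Fintype.card m) := by
    simpa using (hasSum_nat_add_iff' 1).2 (hasSum_trace_exp A)
  have hnonneg (k : ℕ) : 0 ≤ f k :=
    mul_nonneg (by positivity) (Finset.sum_nonneg fun i _ => pow_apply_nonneg hA _ i i)
  calc (exp A).trace = Fintype.card m ↔ HasSum f 0 :=
        sub_eq_zero.symm.trans ⟨(· ▸ htail), htail.unique⟩
    _ ↔ f = 0 := hasSum_zero_iff_of_nonneg hnonneg
    _ ↔ ∀ k, (A ^ (k + 1)).trace = 0 := by simp [f, funext_iff, Nat.factorial_ne_zero]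

end Matrix

theorem notears_eq_zero_iff_acyclic {n : ℕ} (W : Matrix (Fin n) (Fin n) ℝ) :
    (NormedSpace.exp (W ⊙ W)).trace - (n : ℝ) = 0 ↔ W.IsAcyclicDigraph := by
  have hA : ∀ i j, 0 ≤ (W ⊙ W) i j := fun i j => mul_self_nonneg (W i j)
  have hiff := (Matrix.trace_exp_eq_card_iff hA).trans
    (Matrix.forall_trace_pow_succ_eq_zero_iff hA)
  rw [Fintype.card_fin] at hiff
  simp only [sub_eq_zero, hiff, Matrix.IsAcyclicDigraph, Matrix.hadamard_apply, ne_eq,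
    mul_self_eq_zero]
end
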